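/- Let d ≥ 1 and N ≥ 2 be integers, set h = 1/(N−1) and grid coordinates x_{j,i} = (i−1)·h for i = 1, …, N in each dimension j = 1, …, d, let φ_t denote the ReLU hat function of half-width h centered at t, let y_{i₁,…,i_d} ∈ ℝ for all multi-indices, and let b ∈ [d−1, d). Define Φ_{i₁,…,i_d}(x) = Σ_{j=1}^{d} φ_{x_{j,i_j}}(x_j) and f(x) = Σ_{i₁,…,i_d=1}^{N} y_{i₁,…,i_d} · ReLU(Φ_{i₁,…,i_d}(x) − b)/(d − b). Then: (i) f(x_{1,i₁}, …, x_{d,i_d}) = y_{i₁,…,i_d} for every multi-index (i₁, …, i_d); and (ii) f(x) = 0 for every x ∈ ℝ^d whose sup-norm distance to the grid {(x_{1,i₁}, …, x_{d,i_d})} is at least (d − b)·h. -/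
import Mathlib


noncomputable def relu (x : ℝ) : ℝ := max x 0

/-- The one-dimensional ReLU hat function of half-width `h` centered at `t`. -/
noncomputable def hat (h t x : ℝ) : ℝ :=
  (1 / h) * relu (x - t + h) - (2 / h) * relu (x - t) + (1 / h) * relu (x - t - h)

lemma hat_eq {h : ℝ} (hh : 0 < h) (t x : ℝ) :
    hat h t x = max (1 - |x - t| / h) 0 := by
  unfold hat relu
  rcases le_total (x - t) 0 with hs | hs
  · rw [max_eq_right hs, abs_of_nonpos hs]
    rcases le_total (x - t + h) 0 with h1 | h1
    · rw [max_eq_right h1, max_eq_right (by linarith : x - t - h ≤ 0), max_eq_right]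
      · ring
      · rw [sub_nonpos, le_div_iff₀ hh]; linarith
    · rw [max_eq_left h1, max_eq_right (by linarith : x - t - h ≤ 0), max_eq_left]
      · field_simp; ring
      · rw [sub_nonneg, div_le_one hh]; linarith
  · rw [abs_of_nonneg hs, max_eq_left hs]
    rcases le_total (x - t - h) 0 with h1 | h1
    · rw [max_eq_right h1, max_eq_left (by linarith : 0 ≤ x - t + h), max_eq_left]
      · field_simp; ring
      · rw [sub_nonneg, div_le_one hh]; linarith
    · rw [max_eq_left h1, max_eq_left (by linarith : 0 ≤ x - t + h), max_eq_right]
      · field_simp; ring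
      · rw [sub_nonpos, le_div_iff₀ hh]; linarith

lemma hat_le_one {h : ℝ} (hh : 0 < h) (t x : ℝ) : hat h t x ≤ 1 := by
  rw [hat_eq hh]
  have : 0 ≤ |x - t| / h := by positivity
  apply max_le <;> linarith

lemma hat_self {h : ℝ} (hh : 0 < h) (t : ℝ) : hat h t t = 1 := by
  rw [hat_eq hh]; simp

lemma hat_le {h : ℝ} (hh : 0 < h) (t x c : ℝ) (hx : c * h ≤ |x - t|) :
    hat h t x ≤ max (1 - c) 0 := by
  rw [hat_eq hh]
  have : c ≤ |x - t| / h := by rw [le_div_iff₀ hh]; linarith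
  exact max_le_max (by linarith) le_rfl

lemma hat_eq_zero {h : ℝ} (hh : 0 < h) (t x : ℝ) (hx : h ≤ |x - t|) :
    hat h t x = 0 := by
  rw [hat_eq hh, max_eq_right]
  rw [sub_nonpos, le_div_iff₀ hh]; linarith

/-- d-dimensional function-approximation network: exact
interpolation on the uniform `N^d` grid yet identically 0 away from the grid. -/
theorem stmt_11 (d N : ℕ) (hd : 0 < d) (hN : 2 ≤ N)
    (h : ℝ) (hh : h = 1 / ((N : ℝ) - 1))
    (xg : ℕ → ℝ) (hxg : ∀ i, xg i = ((i : ℝ) - 1) * h)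
    (y : (Fin d → ℕ) → ℝ) (b : ℝ) (hb : (d : ℝ) - 1 ≤ b ∧ b < (d : ℝ))
    (Φ : (Fin d → ℕ) → (Fin d → ℝ) → ℝ)
    (hΦ : ∀ ι x, Φ ι x = ∑ j : Fin d, hat h (xg (ι j)) (x j))
    (f : (Fin d → ℝ) → ℝ)
    (hf : ∀ x, f x = ∑ ι ∈ Fintype.piFinset (fun _ : Fin d => Finset.Icc 1 N),
      y ι * (relu (Φ ι x - b) / ((d : ℝ) - b))) :
    (∀ ι : Fin d → ℕ, (∀ j, ι j ∈ Finset.Icc 1 N) →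
      f (fun j => xg (ι j)) = y ι) ∧
    (∀ x : Fin d → ℝ,
      (∀ ι : Fin d → ℕ, (∀ j, ι j ∈ Finset.Icc 1 N) →
        ∃ j : Fin d, ((d : ℝ) - b) * h ≤ |x j - xg (ι j)|) →
      f x = 0) := by
  have hN1 : (2:ℝ) ≤ (N:ℝ) := by exact_mod_cast hN
  have hh0 : 0 < h := by rw [hh]; apply one_div_pos.mpr; linarith
  have hdb : 0 < (d:ℝ) - b := by linarith [hb.2]
  have hgrid : ∀ a c : ℕ, hat h (xg a) (xg c) = if c = a then 1 else 0 := by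
    intro a c
    by_cases hac : c = a
    · subst hac; rw [if_pos rfl, hat_self hh0]
    · rw [if_neg hac]
      apply hat_eq_zero hh0
      rw [hxg, hxg]
      have he : ((c:ℝ) - 1) * h - ((a:ℝ) - 1) * h = ((c:ℝ) - (a:ℝ)) * h := by ring
      rw [he, abs_mul, abs_of_pos hh0]
      have hz : (1:ℤ) ≤ |(c:ℤ) - (a:ℤ)| :=
        Int.one_le_abs (sub_ne_zero.mpr (by exact_mod_cast hac))
      have h1 : (1:ℝ) ≤ |(c:ℝ) - (a:ℝ)| := by
        have := (@Int.cast_le ℝ _ _ _).mpr hz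
        push_cast at this; exact this
      exact le_mul_of_one_le_left hh0.le h1
  constructor
  · intro ι hι
    rw [hf]
    rw [Finset.sum_eq_single ι]
    · have hΦd : Φ ι (fun j => xg (ι j)) = d := by
        rw [hΦ]; simp [hgrid]
      rw [hΦd, relu, max_eq_left hdb.le, div_self (ne_of_gt hdb), mul_one]
    · intro ι' hmem hne
      have hex : ∃ j, ι j ≠ ι' j := by
        by_contra hc; push_neg at hc
        exact hne (funext fun j => (hc j).symm)
      obtain ⟨j0, hj0⟩ := hex
      have hΦle : Φ ι' (fun j => xg (ι j)) ≤ (d:ℝ) - 1 := by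
        rw [hΦ]
        calc ∑ j : Fin d, hat h (xg (ι' j)) (xg (ι j))
            = ∑ j : Fin d, (if ι j = ι' j then (1:ℝ) else 0) := by
              exact Finset.sum_congr rfl fun j _ => hgrid (ι' j) (ι j)
          _ ≤ ∑ j : Fin d, (if j = j0 then (0:ℝ) else 1) := by
              apply Finset.sum_le_sum
              intro j _
              by_cases hj : j = j0
              · subst hj
                rw [if_pos rfl, if_neg (fun hcon => hj0 hcon)]
              · rw [if_neg hj]
                split <;> norm_num
          _ = ∑ j : Fin d, ((1:ℝ) - if j = j0 then 1 else 0) := by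
              apply Finset.sum_congr rfl
              intro j _; split <;> ring
          _ = (d:ℝ) - 1 := by
              rw [Finset.sum_sub_distrib]
              simp [Finset.sum_ite_eq']
      have hr : relu (Φ ι' (fun j => xg (ι j)) - b) = 0 := by
        rw [relu, max_eq_right (by linarith [hb.1])]
      rw [hr]; simp
    · intro habs
      exact absurd (Fintype.mem_piFinset.mpr hι) habs
  · intro x hx
    rw [hf]
    apply Finset.sum_eq_zero
    intro ι hι
    have hιmem : ∀ j, ι j ∈ Finset.Icc 1 N := fun j => Fintype.mem_piFinset.mp hι j
    obtain ⟨j0, hj0⟩ := hx ι hιmem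
    have hΦle : Φ ι x ≤ b := by
      rw [hΦ]
      calc ∑ j : Fin d, hat h (xg (ι j)) (x j)
          ≤ ∑ j : Fin d, (if j = j0 then b - (d:ℝ) + 1 else 1) := by
            apply Finset.sum_le_sum
            intro j _
            by_cases hj : j = j0
            · subst hj
              rw [if_pos rfl]
              calc hat h (xg (ι j)) (x j) ≤ max (1 - ((d:ℝ) - b)) 0 :=
                    hat_le hh0 _ _ _ hj0
                _ = b - (d:ℝ) + 1 := by
                    rw [max_eq_left (by linarith [hb.1])]; ring
            · rw [if_neg hj]
              exact hat_le_one hh0 _ _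
        _ = ∑ j : Fin d, ((1:ℝ) + if j = j0 then b - (d:ℝ) else 0) := by
            apply Finset.sum_congr rfl
            intro j _; split <;> ring
        _ = b := by
            rw [Finset.sum_add_distrib]
            simp [Finset.sum_ite_eq']
    have hr : relu (Φ ι x - b) = 0 := by
      rw [relu, max_eq_right (by linarith)]
    rw [hr]; simp
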